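/- arXiv:1902.09800 — 2 statements merged into one kernel-verified Lean document; each statement's English description precedes it below -/
import Mathlib

section
/- Let A be an n×n quaternion matrix. Define the map f : ℂ → ℂ by f(λ) = e^λ if Im(e^λ) ≥ 0 and f(λ) = e^{conj(λ)} otherwise. Then the multiset of standard eigenvalues of exp(A) equals the image under f of the multiset of standard eigenvalues of A. -/
open Matrix Polynomial
open scoped Quaternion

noncomputable section

/-- The two complex components of a quaternion: `q = c1 q + (c2 q) * j`,
identifying `ℂ` with the real span of `1` and `i` in `ℍ`. -/
def Quaternion.c1 (q : ℍ[ℝ]) : ℂ := ⟨q.re, q.imI⟩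

def Quaternion.c2 (q : ℍ[ℝ]) : ℂ := ⟨q.imJ, q.imK⟩

/-- The embedding of `ℂ` into `ℍ` as the real span of `1` and `i`. -/
def Complex.toQuat (z : ℂ) : ℍ[ℝ] := ⟨z.re, z.im, 0, 0⟩

/-- The complex adjoint matrix `χ_A` of a quaternion matrix `A = A₁ + A₂·j`:
the block matrix `[[A₁, A₂], [-conj A₂, conj A₁]]`. -/
def chiMat {n : ℕ} (A : Matrix (Fin n) (Fin n) ℍ[ℝ]) :
    Matrix (Fin n ⊕ Fin n) (Fin n ⊕ Fin n) ℂ :=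
  Matrix.fromBlocks (A.map Quaternion.c1) (A.map Quaternion.c2)
    ((-(A.map Quaternion.c2)).map (starRingEnd ℂ)) ((A.map Quaternion.c1).map (starRingEnd ℂ))

/-- `ρ` is a standard eigenvalue of the quaternion matrix `A`: an eigenvalue of the
complex adjoint matrix `χ_A` with nonnegative imaginary part. -/
def IsStdEigenvalue {n : ℕ} (A : Matrix (Fin n) (Fin n) ℍ[ℝ]) (ρ : ℂ) : Prop :=
  (chiMat A).charpoly.IsRoot ρ ∧ 0 ≤ ρ.im

/-- `s` is the multiset of standard eigenvalues of `A` counted with multiplicity: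
it has `n` elements, all with nonnegative imaginary part, and the characteristic
polynomial of `χ_A` is `∏_{z ∈ s} (X - z)·(X - conj z)`. -/
def IsStdEigs {n : ℕ} (A : Matrix (Fin n) (Fin n) ℍ[ℝ]) (s : Multiset ℂ) : Prop :=
  Multiset.card s = n ∧ (∀ z ∈ s, 0 ≤ z.im) ∧
    (chiMat A).charpoly =
      (s.map (fun z => (X - C z) * (X - C (starRingEnd ℂ z)))).prod

/-- `x : ℝ → ℍ^n` is a solution of the linear quaternionic system `ẋ = A(t)x`. -/
def IsSol {n : ℕ} (A : ℝ → Matrix (Fin n) (Fin n) ℍ[ℝ]) (x : ℝ → Fin n → ℍ[ℝ]) : Prop :=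
  ∀ t : ℝ, HasDerivAt x ((A t).mulVec (x t)) t

/-- The norm `‖x‖ = Σ_k |x_k|` on `ℍ^n`. -/
def vecNorm {n : ℕ} (x : Fin n → ℍ[ℝ]) : ℝ := ∑ k, ‖x k‖

/-- The norm `‖A‖ = Σ_{i,j} |a_{ij}|` on `ℍ^{n×n}`. -/
def matNorm {n : ℕ} (A : Matrix (Fin n) (Fin n) ℍ[ℝ]) : ℝ := ∑ i, ∑ j, ‖A i j‖

/-- Stability (in the sense of Lyapunov) of the system `ẋ = A(t)x` at `t₀`. -/
def StableAt {n : ℕ} (A : ℝ → Matrix (Fin n) (Fin n) ℍ[ℝ]) (t₀ : ℝ) : Prop :=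
  ∀ ε > (0:ℝ), ∃ δ > (0:ℝ), ∀ x : ℝ → Fin n → ℍ[ℝ], IsSol A x →
    vecNorm (x t₀) < δ → ∀ t ≥ t₀, vecNorm (x t) < ε

/-- Asymptotic stability of the system `ẋ = A(t)x` at `t₀`. -/
def AsympStableAt {n : ℕ} (A : ℝ → Matrix (Fin n) (Fin n) ℍ[ℝ]) (t₀ : ℝ) : Prop :=
  StableAt A t₀ ∧ ∃ δ > (0:ℝ), ∀ x : ℝ → Fin n → ℍ[ℝ], IsSol A x →
    vecNorm (x t₀) < δ →
      Filter.Tendsto (fun t => vecNorm (x t)) Filter.atTop (nhds 0)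

/-- `M` is a fundamental matrix of `ẋ = A(t)x`: entrywise `M'(t) = A(t)·M(t)`
and `M(t)` is invertible for every `t`. -/
def IsFundamental {n : ℕ} (A M : ℝ → Matrix (Fin n) (Fin n) ℍ[ℝ]) : Prop :=
  (∀ (t : ℝ) (i j : Fin n), HasDerivAt (fun s => M s i j) ((A t * M t) i j) t) ∧
    ∀ t : ℝ, IsUnit (M t)

/-!
Since `χ` is a continuous `ℝ`-algebra homomorphism, `χ_{exp A} = exp χ_A`, so everything reduces
to the spectral mapping theorem with multiplicities for complex matrices: the roots of the
characteristic polynomial of `exp M` are the exponentials of those of `M`. That follows by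
induction on the size: an eigenvector of `M` makes `M` similar to a block triangular matrix with a
`1 × 1` block, and both the characteristic polynomial and the exponential of a block triangular
matrix are computed blockwise. The roots of the characteristic polynomial of `χ_A` are `s` and
`conj s`; the exponentials of `z` and `conj z` are conjugate, and `f z` is the one of the pair in
the closed upper half plane.
-/

namespace Matrix

section BlockTriangular

variable {m α R : Type*} [Fintype m] [LinearOrder α] {b : m → α}

theorem BlockTriangular.toSquareBlock_mul [NonUnitalNonAssocSemiring R] {M N : Matrix m m R}
    (hM : M.BlockTriangular b) (hN : N.BlockTriangular b) (a : α) :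
    (M * N).toSquareBlock b a = M.toSquareBlock b a * N.toSquareBlock b a := by
  ext ⟨i, hi⟩ ⟨j, hj⟩
  change ∑ k, M i k * N k j = ∑ k : {k // b k = a}, M i k * N k j
  refine (Finset.sum_filter_of_ne (p := (b · = a)) ?_).symm.trans
    (Finset.sum_subtype _ (by simp) fun k => M i k * N k j)
  intro k _ hk
  have h1 : ¬ b k < b i := fun h => hk (by rw [hM h, zero_mul])
  have h2 : ¬ b j < b k := fun h => hk (by rw [hN h, mul_zero])
  exact le_antisymm (by simpa [hj] using h2) (by simpa [hi] using h1)

variable [DecidableEq m]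

theorem BlockTriangular.toSquareBlock_pow [Semiring R] {M : Matrix m m R}
    (hM : M.BlockTriangular b) (a : α) (k : ℕ) :
    (M ^ k).toSquareBlock b a = M.toSquareBlock b a ^ k := by
  induction k with
  | zero => ext ⟨i, hi⟩ ⟨j, hj⟩; simp [toSquareBlock_def, one_apply, Subtype.ext_iff]
  | succ k ih => rw [pow_succ, (hM.pow k).toSquareBlock_mul hM, ih, pow_succ]

theorem exp_series_hasSum_exp' {𝕂 : Type*} [RCLike 𝕂] (M : Matrix m m 𝕂) :
    HasSum (fun n => (n.factorial⁻¹ : 𝕂) • M ^ n) (NormedSpace.exp M) := by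
  open scoped Norms.Operator in
  exact NormedSpace.exp_series_hasSum_exp' M

theorem BlockTriangular.toSquareBlock_exp {𝕂 : Type*} [RCLike 𝕂] {M : Matrix m m 𝕂}
    (hM : M.BlockTriangular b) (a : α) :
    (NormedSpace.exp M).toSquareBlock b a = NormedSpace.exp (M.toSquareBlock b a) := by
  refine HasSum.unique ?_ (exp_series_hasSum_exp' _)
  simp_rw [← hM.toSquareBlock_pow]
  have hs := exp_series_hasSum_exp' M
  exact Pi.hasSum.mpr fun i => Pi.hasSum.mpr fun j => Pi.hasSum.mp (Pi.hasSum.mp hs i) j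

theorem BlockTriangular.charpoly_exp {M : Matrix m m ℂ} (hM : M.BlockTriangular b)
    (h : ∀ a, (NormedSpace.exp (M.toSquareBlock b a)).charpoly =
      ((M.toSquareBlock b a).charpoly.roots.map fun z => X - C (Complex.exp z)).prod) :
    (NormedSpace.exp M).charpoly =
      (M.charpoly.roots.map fun z => X - C (Complex.exp z)).prod := by
  rw [hM.exp.charpoly, hM.charpoly,
    roots_prod _ _ (Finset.prod_ne_zero_iff.mpr fun a _ => (charpoly_monic _).ne_zero),
    Multiset.map_bind, Multiset.prod_bind]
  simp_rw [hM.toSquareBlock_exp, h]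
  rfl

end BlockTriangular

variable {m : Type*} [Fintype m] [DecidableEq m]

theorem exists_units_mulVec_single_eq {K : Type*} [Field K] {v : m → K} (hv : v ≠ 0) :
    ∃ (U : (Matrix m m K)ˣ) (i₀ : m), (U : Matrix m m K) *ᵥ Pi.single i₀ 1 = v := by
  obtain ⟨i₀, hi₀⟩ := Function.ne_iff.mp hv
  have hdet : IsUnit (updateCol 1 i₀ v).det := by
    rw [← cramer_apply, cramer_one]
    exact isUnit_iff_ne_zero.mpr hi₀
  refine ⟨((isUnit_iff_isUnit_det _).mpr hdet).unit, i₀, ?_⟩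
  ext i
  simp [mulVec_single]

theorem exists_units_conj_blockTriangular {K : Type*} [Field K] [IsAlgClosed K] [Nonempty m]
    (M : Matrix m m K) :
    ∃ (U : (Matrix m m K)ˣ) (i₀ : m),
      BlockTriangular (U⁻¹ * M * U : Matrix m m K) fun i => decide (i ≠ i₀) := by
  obtain ⟨μ, hμ⟩ := Module.End.exists_eigenvalue (toLin' M)
  obtain ⟨v, hv, hv0⟩ := hμ.exists_hasEigenvector
  obtain ⟨U, i₀, hUv⟩ := exists_units_mulVec_single_eq hv0
  have hMv : M *ᵥ v = μ • v := Module.End.mem_eigenspace_iff.mp hv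
  have hcol : (U⁻¹ * M * U : Matrix m m K) *ᵥ Pi.single i₀ 1 = μ • Pi.single i₀ 1 := by
    rw [← mulVec_mulVec, ← mulVec_mulVec, hUv, hMv, mulVec_smul, ← hUv, mulVec_mulVec,
      Units.inv_mul, one_mulVec]
  refine ⟨U, i₀, fun i j hij => ?_⟩
  obtain ⟨rfl, hi⟩ : j = i₀ ∧ i ≠ i₀ := by simpa [Bool.lt_iff] using hij
  simpa [mulVec_single, hi] using congrFun hcol i

theorem charpoly_exp_diagonal (v : m → ℂ) :
    (NormedSpace.exp (diagonal v)).charpoly =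
      ((diagonal v).charpoly.roots.map fun z => X - C (Complex.exp z)).prod := by
  have hroots : (∏ i, (X - C (v i))).roots = Finset.univ.val.map v := by
    simpa using roots_multiset_prod_X_sub_C (Finset.univ.val.map v)
  rw [exp_diagonal, charpoly_diagonal, charpoly_diagonal, hroots, Multiset.map_map,
    Finset.prod_eq_multiset_prod]
  simp [Complex.exp_eq_exp_ℂ]

theorem charpoly_exp_of_subsingleton [Subsingleton m] (M : Matrix m m ℂ) :
    (NormedSpace.exp M).charpoly =
      (M.charpoly.roots.map fun z => X - C (Complex.exp z)).prod := by
  have hM : M = diagonal M.diag := by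
    ext i j
    rw [Subsingleton.elim j i, diagonal_apply_eq, diag_apply]
  rw [hM]
  exact charpoly_exp_diagonal _

theorem charpoly_exp (M : Matrix m m ℂ) :
    (NormedSpace.exp M).charpoly =
      (M.charpoly.roots.map fun z => X - C (Complex.exp z)).prod := by
  induction hk : Fintype.card m using Nat.strong_induction_on generalizing m with
  | _ k ih =>
    rcases isEmpty_or_nonempty m with _ | _
    · exact charpoly_exp_of_subsingleton M
    obtain ⟨U, i₀, hU⟩ := exists_units_conj_blockTriangular M
    rw [← charpoly_units_conj' U M, ← charpoly_units_conj' U (NormedSpace.exp M), ← coe_units_inv,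
      ← exp_units_conj']
    refine hU.charpoly_exp fun a => ?_
    cases a
    · have : Subsingleton {i // decide (i ≠ i₀) = false} :=
        ⟨fun x y => Subtype.ext <|
          (by simpa using x.2 : (x : m) = i₀).trans (by simpa using y.2 : (y : m) = i₀).symm⟩
      exact charpoly_exp_of_subsingleton _
    · exact ih _ (hk ▸ Fintype.card_subtype_lt (x := i₀) (by simp)) _ rfl

end Matrix

namespace Quaternion

@[simp] lemma c1_add (p q : ℍ[ℝ]) : c1 (p + q) = c1 p + c1 q := by simp [c1, Complex.ext_iff]
@[simp] lemma c2_add (p q : ℍ[ℝ]) : c2 (p + q) = c2 p + c2 q := by simp [c2, Complex.ext_iff]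
@[simp] lemma c1_smul (r : ℝ) (q : ℍ[ℝ]) : c1 (r • q) = r * c1 q := by simp [c1, Complex.ext_iff]
@[simp] lemma c2_smul (r : ℝ) (q : ℍ[ℝ]) : c2 (r • q) = r * c2 q := by simp [c2, Complex.ext_iff]
@[simp] lemma c1_one : c1 1 = 1 := by simp [c1, Complex.ext_iff]
@[simp] lemma c2_one : c2 1 = 0 := by simp [c2, Complex.ext_iff]
@[simp] lemma c1_zero : c1 0 = 0 := by simp [c1, Complex.ext_iff]
@[simp] lemma c2_zero : c2 0 = 0 := by simp [c2, Complex.ext_iff]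

lemma c1_mul (p q : ℍ[ℝ]) : c1 (p * q) = c1 p * c1 q - c2 p * starRingEnd ℂ (c2 q) := by
  simp only [c1, c2, Complex.ext_iff, re_mul, imI_mul, Complex.sub_re, Complex.sub_im,
    Complex.mul_re, Complex.mul_im, Complex.conj_re, Complex.conj_im]
  constructor <;> ring

lemma c2_mul (p q : ℍ[ℝ]) : c2 (p * q) = c1 p * c2 q + c2 p * starRingEnd ℂ (c1 q) := by
  simp only [c1, c2, Complex.ext_iff, imJ_mul, imK_mul, Complex.add_re, Complex.add_im,
    Complex.mul_re, Complex.mul_im, Complex.conj_re, Complex.conj_im]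
  constructor <;> ring

lemma c1_sum {ι : Type*} (s : Finset ι) (f : ι → ℍ[ℝ]) :
    c1 (∑ i ∈ s, f i) = ∑ i ∈ s, c1 (f i) :=
  map_sum (AddMonoidHom.mk' c1 c1_add) f s

lemma c2_sum {ι : Type*} (s : Finset ι) (f : ι → ℍ[ℝ]) :
    c2 (∑ i ∈ s, f i) = ∑ i ∈ s, c2 (f i) :=
  map_sum (AddMonoidHom.mk' c2 c2_add) f s

end Quaternion

open Quaternion

section ComplexAdjoint

variable {n : ℕ}

lemma chiMat_add (A B : Matrix (Fin n) (Fin n) ℍ[ℝ]) : chiMat (A + B) = chiMat A + chiMat B := by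
  ext (i | i) (j | j) <;> simp [chiMat, add_comm]

lemma chiMat_smul (r : ℝ) (A : Matrix (Fin n) (Fin n) ℍ[ℝ]) : chiMat (r • A) = r • chiMat A := by
  ext (i | i) (j | j) <;> simp [chiMat, Complex.real_smul]

lemma chiMat_one : chiMat (1 : Matrix (Fin n) (Fin n) ℍ[ℝ]) = 1 := by
  ext (i | i) (j | j) <;> simp [chiMat, one_apply, apply_ite]

lemma chiMat_mul (A B : Matrix (Fin n) (Fin n) ℍ[ℝ]) : chiMat (A * B) = chiMat A * chiMat B := by
  ext (i | i) (j | j) <;>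
    simp only [chiMat, mul_apply, fromBlocks_apply₁₁, fromBlocks_apply₁₂, fromBlocks_apply₂₁,
      fromBlocks_apply₂₂, map_apply, Matrix.neg_apply, Fintype.sum_sum_type, c1_sum, c2_sum,
      c1_mul, c2_mul, map_sum, map_neg, map_sub, map_add, map_mul, Complex.conj_conj,
      ← Finset.sum_add_distrib, ← Finset.sum_neg_distrib] <;>
    exact Finset.sum_congr rfl fun k _ => by ring

variable (n) in
def chiAlgHom : Matrix (Fin n) (Fin n) ℍ[ℝ] →ₐ[ℝ] Matrix (Fin n ⊕ Fin n) (Fin n ⊕ Fin n) ℂ :=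
  AlgHom.ofLinearMap { toFun := chiMat, map_add' := chiMat_add, map_smul' := chiMat_smul }
    chiMat_one chiMat_mul

lemma chiMat_exp (A : Matrix (Fin n) (Fin n) ℍ[ℝ]) :
    chiMat (NormedSpace.exp A) = NormedSpace.exp (chiMat A) := by
  have hcont : Continuous (chiAlgHom n) :=
    (chiAlgHom n).toLinearMap.continuous_of_finiteDimensional
  let : NormedAlgebra ℚ ℍ[ℝ] := NormedAlgebra.restrictScalars ℚ ℝ ℍ[ℝ]
  open scoped Matrix.Norms.Operator in
  exact NormedSpace.map_exp (chiAlgHom n) hcont A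

lemma IsStdEigs.roots_charpoly {A : Matrix (Fin n) (Fin n) ℍ[ℝ]} {s : Multiset ℂ}
    (hs : IsStdEigs A s) : (chiMat A).charpoly.roots = s + s.map (starRingEnd ℂ) := by
  rw [hs.2.2, ← roots_multiset_prod_X_sub_C (s + s.map (starRingEnd ℂ)), Multiset.map_add,
    Multiset.prod_add, Multiset.map_map, Multiset.prod_map_mul]
  rfl

end ComplexAdjoint

def upperExp (l : ℂ) : ℂ :=
  if 0 ≤ (Complex.exp l).im then Complex.exp l else Complex.exp (starRingEnd ℂ l)

lemma upperExp_im_nonneg (l : ℂ) : 0 ≤ (upperExp l).im := by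
  unfold upperExp
  split_ifs with h
  · exact h
  · rw [Complex.exp_conj, Complex.conj_im]
    linarith

lemma X_sub_C_upperExp_mul (l : ℂ) :
    (X - C (upperExp l)) * (X - C (starRingEnd ℂ (upperExp l))) =
      (X - C (Complex.exp l)) * (X - C (Complex.exp (starRingEnd ℂ l))) := by
  unfold upperExp
  split_ifs
  · rw [Complex.exp_conj]
  · rw [Complex.exp_conj, Complex.conj_conj, mul_comm]

/-- the standard eigenvalues of `exp A` are the images of the standard
eigenvalues of `A` under `f(λ) = e^λ` if `Im(e^λ) ≥ 0`, else `f(λ) = e^{conj λ}`. -/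
theorem stmt3 {n : ℕ} (A : Matrix (Fin n) (Fin n) ℍ[ℝ]) (f : ℂ → ℂ)
    (hf : ∀ l : ℂ, f l = if 0 ≤ (Complex.exp l).im then Complex.exp l
      else Complex.exp (starRingEnd ℂ l))
    (s : Multiset ℂ) (hs : IsStdEigs A s) :
    IsStdEigs (NormedSpace.exp A) (s.map f) := by
  obtain rfl : f = upperExp := funext hf
  refine ⟨by rw [Multiset.card_map, hs.1], ?_, ?_⟩
  · simp only [Multiset.mem_map]
    rintro _ ⟨l, -, rfl⟩
    exact upperExp_im_nonneg l
  · rw [chiMat_exp, charpoly_exp, hs.roots_charpoly, Multiset.map_add, Multiset.prod_add,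
      Multiset.map_map, Multiset.map_map, ← Multiset.prod_map_mul]
    simp only [Function.comp_def, X_sub_C_upperExp_mul]
end
end

section
/- Let M be a fundamental matrix of the linear quaternionic system ẋ = A(t)x. Then the system is asymptotically stable at t₀ if and only if ‖M(t)‖ → 0 as t → ∞. -/
open Matrix Polynomial
open scoped Quaternion

noncomputable section

/-!
Since `(M⁻¹ x)' = 0`, every solution is `x(t) = M(t) M(t₀)⁻¹ x(t₀)`, so `‖x(t)‖` is at most
`‖M(t₀)⁻¹‖ ‖x(t₀)‖ ‖M(t)‖`; hence `‖M(t)‖ → 0` gives both stability and attractivity.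
Conversely, the columns of `M` are solutions, attractivity of small solutions extends to all
solutions by scaling, and `‖M(t)‖` is the sum of the norms of its columns.
-/

open Filter Topology

theorem Continuous.exists_forall_ge_le_of_tendsto {f : ℝ → ℝ} (hf : Continuous f) {l : ℝ}
    (hl : Tendsto f atTop (𝓝 l)) (t₀ : ℝ) : ∃ C, ∀ t ≥ t₀, f t ≤ C := by
  obtain ⟨T, hT⟩ := (hl.eventually (gt_mem_nhds (lt_add_one l))).exists_forall_of_atTop
  obtain ⟨C, hC⟩ := (isCompact_Icc (a := t₀) (b := T)).bddAbove_image hf.continuousOn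
  refine ⟨max C (l + 1), fun t ht => ?_⟩
  rcases le_total t T with htT | hTt
  · exact le_max_of_le_left (hC ⟨t, ⟨ht, htT⟩, rfl⟩)
  · exact le_max_of_le_right (hT t hTt).le

theorem Ring.inverse_mul_eq_of_hasDerivAt {𝔸 : Type*} [NormedRing 𝔸] [NormedAlgebra ℝ 𝔸]
    [HasSummableGeomSeries 𝔸] {A M X : ℝ → 𝔸} (hM : ∀ t, HasDerivAt M (A t * M t) t)
    (hMu : ∀ t, IsUnit (M t)) (hX : ∀ t, HasDerivAt X (A t * X t) t) (s t : ℝ) :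
    Ring.inverse (M t) * X t = Ring.inverse (M s) * X s := by
  have hderiv : ∀ t, HasDerivAt (fun t => Ring.inverse (M t) * X t) 0 t := by
    intro t
    obtain ⟨u, hu⟩ := hMu t
    have hinv := hasFDerivAt_ringInverse (𝕜 := ℝ) u
    rw [hu] at hinv
    have hinvM : HasDerivAt (fun t => Ring.inverse (M t)) _ t := hinv.comp_hasDerivAt t (hM t)
    refine (hinvM.fun_mul (hX t)).congr_deriv ?_
    simp [← hu, mul_assoc]
  exact is_const_of_deriv_eq_zero (fun t => (hderiv t).differentiableAt)
    (fun t => (hderiv t).deriv) t s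

section Norms

variable {n : ℕ}

theorem vecNorm_nonneg (x : Fin n → ℍ[ℝ]) : 0 ≤ vecNorm x :=
  Finset.sum_nonneg fun _ _ => norm_nonneg _

theorem matNorm_nonneg (B : Matrix (Fin n) (Fin n) ℍ[ℝ]) : 0 ≤ matNorm B :=
  Finset.sum_nonneg fun _ _ => Finset.sum_nonneg fun _ _ => norm_nonneg _

theorem vecNorm_smul (r : ℝ) (x : Fin n → ℍ[ℝ]) : vecNorm (r • x) = |r| * vecNorm x := by
  simp [vecNorm, norm_smul, Finset.mul_sum]

theorem vecNorm_mulVec_le (B : Matrix (Fin n) (Fin n) ℍ[ℝ]) (v : Fin n → ℍ[ℝ]) :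
    vecNorm (B *ᵥ v) ≤ matNorm B * vecNorm v := by
  have hv : ∀ j, ‖v j‖ ≤ vecNorm v := fun j =>
    Finset.single_le_sum (f := fun k => ‖v k‖) (fun _ _ => norm_nonneg _) (Finset.mem_univ j)
  calc vecNorm (B *ᵥ v) ≤ ∑ i, ∑ j, ‖B i j‖ * ‖v j‖ :=
        Finset.sum_le_sum fun i _ => (norm_sum_le Finset.univ fun j => B i j * v j).trans
          (Finset.sum_le_sum fun j _ => norm_mul_le _ _)
    _ ≤ ∑ i, ∑ j, ‖B i j‖ * vecNorm v := by gcongr with i _ j _; exact hv j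
    _ = matNorm B * vecNorm v := by simp only [matNorm, Finset.sum_mul]

theorem matNorm_eq_sum_vecNorm_col (B : Matrix (Fin n) (Fin n) ℍ[ℝ]) :
    matNorm B = ∑ j, vecNorm fun i => B i j :=
  Finset.sum_comm

end Norms

section Solutions

variable {n : ℕ} {A M : ℝ → Matrix (Fin n) (Fin n) ℍ[ℝ]} {x : ℝ → Fin n → ℍ[ℝ]}

theorem IsSol.const_smul (hx : IsSol A x) (r : ℝ) : IsSol A (r • x) := fun t => by
  simpa only [Pi.smul_apply, Matrix.mulVec_smul] using (hx t).const_smul r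

theorem IsSol.hasDerivAt_replicateCol (hx : IsSol A x) (t : ℝ) :
    HasDerivAt (fun s => replicateCol (Fin n) (x s)) (A t * replicateCol (Fin n) (x t)) t := by
  rw [← replicateCol_mulVec]
  exact hasDerivAt_pi.2 fun i => hasDerivAt_pi.2 fun _ => hasDerivAt_pi.1 (hx t) i

theorem IsFundamental.hasDerivAt (hM : IsFundamental A M) (t : ℝ) :
    HasDerivAt M (A t * M t) t :=
  hasDerivAt_pi.2 fun i => hasDerivAt_pi.2 fun j => hM.1 t i j

theorem IsFundamental.isSol_col (hM : IsFundamental A M) (j : Fin n) :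
    IsSol A fun t i => M t i j :=
  fun t => hasDerivAt_pi.2 fun i => hM.1 t i j

theorem IsFundamental.continuous_matNorm (hM : IsFundamental A M) :
    Continuous fun t => matNorm (M t) :=
  continuous_finsetSum _ fun i _ => continuous_finsetSum _ fun j _ =>
    (continuous_iff_continuousAt.2 fun t => (hM.1 t i j).continuousAt).norm

theorem IsSol.eq_mulVec (hM : IsFundamental A M) (hx : IsSol A x) (t₀ t : ℝ) :
    x t = M t *ᵥ (Ring.inverse (M t₀) *ᵥ x t₀) := by
  -- `HasDerivAt` for matrices only sees the product topology, so any algebra norm will do.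
  let _ := Matrix.linftyOpNormedRing (n := Fin n) (α := ℍ[ℝ])
  let _ := Matrix.linftyOpNormedAlgebra (R := ℝ) (n := Fin n) (α := ℍ[ℝ])
  have hconst := Ring.inverse_mul_eq_of_hasDerivAt hM.hasDerivAt hM.2 hx.hasDerivAt_replicateCol
    t₀ t
  have hcol : replicateCol (Fin n) (x t) =
      replicateCol (Fin n) (M t *ᵥ (Ring.inverse (M t₀) *ᵥ x t₀)) := by
    rw [replicateCol_mulVec, replicateCol_mulVec, ← hconst, ← mul_assoc,
      Ring.mul_inverse_cancel _ (hM.2 t), one_mul]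
  funext i
  exact congrFun (congrFun hcol i) i

theorem IsSol.vecNorm_le (hM : IsFundamental A M) (hx : IsSol A x) (t₀ t : ℝ) :
    vecNorm (x t) ≤ matNorm (Ring.inverse (M t₀)) * vecNorm (x t₀) * matNorm (M t) := by
  rw [hx.eq_mulVec hM t₀ t]
  calc vecNorm (M t *ᵥ (Ring.inverse (M t₀) *ᵥ x t₀))
      ≤ matNorm (M t) * vecNorm (Ring.inverse (M t₀) *ᵥ x t₀) := vecNorm_mulVec_le _ _
    _ ≤ matNorm (M t) * (matNorm (Ring.inverse (M t₀)) * vecNorm (x t₀)) :=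
        mul_le_mul_of_nonneg_left (vecNorm_mulVec_le _ _) (matNorm_nonneg _)
    _ = _ := by ring

theorem IsSol.tendsto_vecNorm_of_attractive {t₀ δ : ℝ} (hδ : 0 < δ)
    (hattr : ∀ y, IsSol A y → vecNorm (y t₀) < δ → Tendsto (fun t => vecNorm (y t)) atTop (𝓝 0))
    (hx : IsSol A x) : Tendsto (fun t => vecNorm (x t)) atTop (𝓝 0) := by
  set r := δ / (vecNorm (x t₀) + 1)
  have hr : 0 < r := div_pos hδ (by linarith [vecNorm_nonneg (x t₀)])
  have hsmall : vecNorm ((r • x) t₀) < δ := by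
    rw [Pi.smul_apply, vecNorm_smul, abs_of_pos hr, div_mul_eq_mul_div,
      div_lt_iff₀ (by linarith [vecNorm_nonneg (x t₀)])]
    exact mul_lt_mul_of_pos_left (lt_add_one _) hδ
  have hscaled := (hattr _ (hx.const_smul r) hsmall).const_mul r⁻¹
  simpa only [Pi.smul_apply, vecNorm_smul, abs_of_pos hr, inv_mul_cancel_left₀ hr.ne',
    mul_zero] using hscaled

theorem stableAt_of_forall_vecNorm_le {t₀ : ℝ} (K : ℝ)
    (hK : ∀ x, IsSol A x → ∀ t ≥ t₀, vecNorm (x t) ≤ K * vecNorm (x t₀)) : StableAt A t₀ := by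
  intro ε hε
  have hK1 : 0 < |K| + 1 := by positivity
  refine ⟨ε / (|K| + 1), div_pos hε hK1, fun x hx hsmall t ht => ?_⟩
  rw [lt_div_iff₀ hK1] at hsmall
  calc vecNorm (x t) ≤ K * vecNorm (x t₀) := hK x hx t ht
    _ ≤ |K| * vecNorm (x t₀) := by gcongr; exacts [vecNorm_nonneg _, le_abs_self K]
    _ < ε := by nlinarith [vecNorm_nonneg (x t₀)]

end Solutions

theorem stmt5_general {n : ℕ} (A M : ℝ → Matrix (Fin n) (Fin n) ℍ[ℝ])
    (hM : IsFundamental A M) (t₀ : ℝ) :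
    AsympStableAt A t₀ ↔
      Filter.Tendsto (fun t => matNorm (M t)) Filter.atTop (nhds 0) := by
  constructor
  · rintro ⟨-, δ, hδ, hattr⟩
    have hcol := fun j => (hM.isSol_col j).tendsto_vecNorm_of_attractive hδ hattr
    simpa only [matNorm_eq_sum_vecNorm_col, Finset.sum_const_zero] using
      tendsto_finsetSum Finset.univ fun j _ => hcol j
  · intro h
    set K := matNorm (Ring.inverse (M t₀))
    have hK : 0 ≤ K := matNorm_nonneg _
    obtain ⟨C, hC⟩ := hM.continuous_matNorm.exists_forall_ge_le_of_tendsto h t₀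
    refine ⟨stableAt_of_forall_vecNorm_le (K * C) fun x hx t ht => ?_, 1, one_pos, fun x hx _ => ?_⟩
    · calc vecNorm (x t) ≤ K * vecNorm (x t₀) * matNorm (M t) := hx.vecNorm_le hM t₀ t
        _ ≤ K * vecNorm (x t₀) * C := by gcongr; exacts [mul_nonneg hK (vecNorm_nonneg _), hC t ht]
        _ = K * C * vecNorm (x t₀) := by ring
    · exact squeeze_zero (fun t => vecNorm_nonneg _) (hx.vecNorm_le hM t₀)
        (by simpa using h.const_mul (K * vecNorm (x t₀)))

/-- the system is asymptotically stable at `t₀` iff `‖M(t)‖ → 0` as `t → ∞`. -/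
theorem stmt5 {n : ℕ} (A M : ℝ → Matrix (Fin n) (Fin n) ℍ[ℝ]) (hA : Continuous A)
    (hM : IsFundamental A M) (t₀ : ℝ) :
    AsympStableAt A t₀ ↔
      Filter.Tendsto (fun t => matNorm (M t)) Filter.atTop (nhds 0) :=
  stmt5_general A M hM t₀
end
end
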